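/- arXiv:1611.10349 — 3 statements merged into one kernel-verified Lean document; each statement's English description precedes it below -/
import Mathlib

section
/- For a matrix M ∈ R^{d₁×d₂} and r ≤ min(d₁,d₂), let P_r(M) denote a best rank-r approximation of M in Frobenius norm (given by truncating the SVD to the top r singular values). Then for any r₁ < r₂ < r₀, any matrix Z of rank at most r₀, and any matrix Y of rank at most r₁: ‖P_{r₂}(Z) − Z‖_F ≤ sqrt((r₀−r₂)/(r₀−r₁)) · ‖Y − Z‖_F. -/
/-- Frobenius norm of a real matrix. -/
noncomputable def frob {m n : Type*} [Fintype m] [Fintype n] (M : Matrix m n ℝ) : ℝ :=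
  Real.sqrt (∑ i, ∑ j, (M i j) ^ 2)

/-!
Let `σ` be the singular values of `Z`, so `σ q ^ 2` is antitone and vanishes for `q ≥ r₀`.
By Eckart–Young, `‖Z - P‖² ≤ ∑_{q ≥ r₂} σ q ^ 2` (compare `P` with the truncated SVD) and
`‖Z - Y‖² ≥ ∑_{q ≥ r₁} σ q ^ 2` (test `Z - Y` on `ker Y`, where it agrees with `Z`, and apply the
bathtub principle to the weights of the right singular vectors on `ker Y`). The mean of the
antitone sequence `σ q ^ 2` over `[r₂, r₀)` is at most its mean over `[r₁, r₀)`, which is the claim.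
-/

open Module LinearMap
open scoped InnerProductSpace

theorem Fin.sum_filter_le_eq_sum_Ico {M : Type*} [AddCommMonoid M] (f : ℕ → M) (n r : ℕ) :
    ∑ i : Fin n with r ≤ i.val, f i = ∑ q ∈ Finset.Ico r n, f q := by
  rw [Finset.sum_filter, Fin.sum_univ_eq_sum_range (fun q => if r ≤ q then f q else 0),
    ← Finset.sum_filter]
  congr 1
  ext q
  simp [and_comm]

theorem Fin.card_filter_le_val (n r : ℕ) :
    (Finset.univ.filter fun i : Fin n => r ≤ i.val).card = n - r := by
  rw [Finset.card_eq_sum_ones, Fin.sum_filter_le_eq_sum_Ico (fun _ => 1),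
    ← Finset.card_eq_sum_ones, Nat.card_Ico]

-- Bathtub principle: weights in `[0, 1]` of total mass at least `#s` cost the least when they sit
-- on the set `s` of smallest values of `l`.
theorem sum_le_sum_mul_of_card_le_sum {ι : Type*} [Fintype ι] (l t : ι → ℝ) (s : Finset ι)
    (c : ℝ) (hc : 0 ≤ c) (hs : ∀ i ∈ s, l i ≤ c) (hsc : ∀ i ∉ s, c ≤ l i) (ht₀ : ∀ i, 0 ≤ t i)
    (ht₁ : ∀ i, t i ≤ 1) (hcard : (s.card : ℝ) ≤ ∑ i, t i) :
    ∑ i ∈ s, l i ≤ ∑ i, l i * t i := by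
  classical
  have key : ∀ i, c * t i - (if i ∈ s then c else 0) ≤ l i * t i - (if i ∈ s then l i else 0) := by
    intro i
    split_ifs with h
    · nlinarith [hs i h, ht₁ i]
    · nlinarith [hsc i h, ht₀ i]
  have := Finset.sum_le_sum fun i (_ : i ∈ Finset.univ) => key i
  simp only [Finset.sum_sub_distrib, ← Finset.mul_sum, Finset.sum_ite_mem, Finset.univ_inter,
    Finset.sum_const, nsmul_eq_mul] at this
  nlinarith [mul_le_mul_of_nonneg_right hcard hc]

theorem Finset.sum_Ico_eq_sum_Ico_of_eq_zero {M : Type*} [AddCommMonoid M] {f : ℕ → M} {m N : ℕ}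
    (hf : ∀ q, m ≤ q → f q = 0) (hN : m ≤ N) (r : ℕ) :
    ∑ q ∈ Finset.Ico r N, f q = ∑ q ∈ Finset.Ico r m, f q :=
  (Finset.sum_subset (Finset.Ico_subset_Ico_right hN) fun q hq hq' => hf q <| by
    simp only [Finset.mem_Ico] at hq hq'
    omega).symm

theorem Antitone.mul_sum_Ico_le_mul_sum_Ico {ν : ℕ → ℝ} (hν : Antitone ν) {r₀ r₁ r₂ : ℕ}
    (h12 : r₁ ≤ r₂) (h20 : r₂ ≤ r₀) :
    ((r₀ - r₁ : ℕ) : ℝ) * ∑ q ∈ Finset.Ico r₂ r₀, ν q ≤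
      ((r₀ - r₂ : ℕ) : ℝ) * ∑ q ∈ Finset.Ico r₁ r₀, ν q := by
  have upper : ∑ q ∈ Finset.Ico r₂ r₀, ν q ≤ ((r₀ - r₂ : ℕ) : ℝ) * ν r₂ := by
    simpa using Finset.sum_le_card_nsmul _ ν (ν r₂) fun q hq => hν (Finset.mem_Ico.mp hq).1
  have lower : ((r₂ - r₁ : ℕ) : ℝ) * ν r₂ ≤ ∑ q ∈ Finset.Ico r₁ r₂, ν q := by
    simpa using Finset.card_nsmul_le_sum _ ν (ν r₂) fun q hq => hν (Finset.mem_Ico.mp hq).2.le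
  rw [← Finset.sum_Ico_consecutive ν h12 h20]
  push_cast [Nat.cast_sub h12, Nat.cast_sub h20, Nat.cast_sub (h12.trans h20)] at upper lower ⊢
  have h₁ : (0 : ℝ) ≤ r₂ - r₁ := sub_nonneg.mpr (Nat.cast_le.mpr h12)
  have h₂ : (0 : ℝ) ≤ r₀ - r₂ := sub_nonneg.mpr (Nat.cast_le.mpr h20)
  nlinarith [mul_le_mul_of_nonneg_left upper h₁, mul_le_mul_of_nonneg_left lower h₂]

namespace LinearMap

variable {𝕜 E F : Type*} [RCLike 𝕜]
  [NormedAddCommGroup E] [InnerProductSpace 𝕜 E] [FiniteDimensional 𝕜 E]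
  [NormedAddCommGroup F] [InnerProductSpace 𝕜 F] [FiniteDimensional 𝕜 F]

-- The squared Hilbert–Schmidt norm; for matrices it is the squared Frobenius norm.
noncomputable def hsNormSq (T : E →ₗ[𝕜] F) : ℝ :=
  RCLike.re (LinearMap.trace 𝕜 E (adjoint T ∘ₗ T))

theorem hsNormSq_eq_sum {ι : Type*} [Fintype ι] (T : E →ₗ[𝕜] F) (b : OrthonormalBasis ι 𝕜 E) :
    T.hsNormSq = ∑ i, ‖T (b i)‖ ^ 2 := by
  rw [hsNormSq, trace_eq_sum_inner _ b, map_sum]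
  simp [adjoint_inner_right]

theorem hsNormSq_nonneg (T : E →ₗ[𝕜] F) : 0 ≤ T.hsNormSq := by
  rw [T.hsNormSq_eq_sum (stdOrthonormalBasis 𝕜 E)]
  positivity

theorem hsNormSq_adjoint (T : E →ₗ[𝕜] F) : (adjoint T).hsNormSq = T.hsNormSq := by
  rw [hsNormSq, hsNormSq, adjoint_adjoint, trace_comp_comm']

theorem sum_norm_apply_sq_le_hsNormSq {ι : Type*} [Fintype ι] (T : E →ₗ[𝕜] F) {u : ι → E}
    (hu : Orthonormal 𝕜 u) : ∑ a, ‖T (u a)‖ ^ 2 ≤ T.hsNormSq := by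
  let f := stdOrthonormalBasis 𝕜 F
  calc ∑ a, ‖T (u a)‖ ^ 2 = ∑ j, ∑ a, ‖⟪u a, adjoint T (f j)⟫_𝕜‖ ^ 2 := by
        simp_rw [← f.sum_sq_norm_inner_right, adjoint_inner_right]
        rw [Finset.sum_comm]
        simp_rw [← inner_conj_symm (T _), RCLike.norm_conj]
    _ ≤ ∑ j, ‖adjoint T (f j)‖ ^ 2 := by
        gcongr with j
        exact hu.sum_inner_products_le _
    _ = T.hsNormSq := by rw [← hsNormSq_eq_sum, hsNormSq_adjoint]

noncomputable def rightSingularBasis (T : E →ₗ[𝕜] F) : OrthonormalBasis (Fin (finrank 𝕜 E)) 𝕜 E :=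
  T.isSymmetric_adjoint_comp_self.eigenvectorBasis rfl

theorem adjoint_apply_apply_rightSingularBasis (T : E →ₗ[𝕜] F) (i : Fin (finrank 𝕜 E)) :
    adjoint T (T (T.rightSingularBasis i)) =
      ((T.singularValues i ^ 2 : ℝ) : 𝕜) • T.rightSingularBasis i := by
  rw [T.sq_singularValues_fin rfl]
  exact T.isSymmetric_adjoint_comp_self.apply_eigenvectorBasis rfl i

theorem norm_apply_sq_eq_sum (T : E →ₗ[𝕜] F) (x : E) :
    ‖T x‖ ^ 2 = ∑ i : Fin (finrank 𝕜 E),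
      T.singularValues i ^ 2 * ‖⟪T.rightSingularBasis i, x⟫_𝕜‖ ^ 2 := by
  have h : ⟪T x, T x⟫_𝕜 = ∑ i : Fin (finrank 𝕜 E),
      ((T.singularValues i ^ 2 * ‖⟪T.rightSingularBasis i, x⟫_𝕜‖ ^ 2 : ℝ) : 𝕜) := by
    rw [← adjoint_inner_right, ← T.rightSingularBasis.sum_inner_mul_inner]
    refine Finset.sum_congr rfl fun i _ => ?_
    rw [adjoint_inner_right, ← adjoint_inner_left, adjoint_apply_apply_rightSingularBasis,
      inner_smul_left, RCLike.conj_ofReal, ← inner_conj_symm x, mul_left_comm, RCLike.conj_mul]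
    push_cast
    ring
  exact_mod_cast congrArg RCLike.re (inner_self_eq_norm_sq_to_K (𝕜 := 𝕜) (T x) ▸ h)

theorem norm_apply_rightSingularBasis_sq (T : E →ₗ[𝕜] F) (i : Fin (finrank 𝕜 E)) :
    ‖T (T.rightSingularBasis i)‖ ^ 2 = T.singularValues i ^ 2 := by
  rw [norm_apply_sq_eq_sum, Finset.sum_eq_single i]
  · simp
  · intro j _ hj
    simp [T.rightSingularBasis.orthonormal.2 hj]
  · simp

theorem sq_singularValues_antitone (T : E →ₗ[𝕜] F) :
    Antitone fun q => T.singularValues q ^ 2 := fun _ _ h =>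
  pow_le_pow_left₀ (T.singularValues_nonneg _) (T.singularValues_antitone h) 2

theorem sum_Ico_sq_singularValues_le_hsNormSq_sub (T W : E →ₗ[𝕜] F) {r : ℕ}
    (hW : finrank 𝕜 (range W) ≤ r) :
    ∑ q ∈ Finset.Ico r (finrank 𝕜 E), T.singularValues q ^ 2 ≤ (T - W).hsNormSq := by
  -- On `ker W` the map `T - W` agrees with `T`; the weights `t i` that an orthonormal basis of
  -- `ker W` puts on the right singular vectors lie in `[0, 1]` and add up to `dim ker W ≥ n - r`.
  set e := T.rightSingularBasis
  let u : Fin (finrank 𝕜 (ker W)) → E := fun a => (stdOrthonormalBasis 𝕜 (ker W) a : E)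
  have hu : Orthonormal 𝕜 u :=
    (stdOrthonormalBasis 𝕜 (ker W)).orthonormal.comp_linearIsometry (ker W).subtypeₗᵢ
  set t : Fin (finrank 𝕜 E) → ℝ := fun i => ∑ a, ‖⟪e i, u a⟫_𝕜‖ ^ 2
  have ht₁ : ∀ i, t i ≤ 1 := fun i => by
    simpa [t, norm_inner_symm, e.orthonormal.1 i] using hu.sum_inner_products_le (e i)
  have hsum_t : ∑ i, t i = finrank 𝕜 (ker W) := by
    rw [Finset.sum_comm]
    simp [e.sum_sq_norm_inner_right, hu.1]
  calc ∑ q ∈ Finset.Ico r (finrank 𝕜 E), T.singularValues q ^ 2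
      = ∑ i : Fin (finrank 𝕜 E) with r ≤ i.val, T.singularValues i ^ 2 :=
        (Fin.sum_filter_le_eq_sum_Ico _ _ _).symm
    _ ≤ ∑ i : Fin (finrank 𝕜 E), T.singularValues i ^ 2 * t i := by
        refine sum_le_sum_mul_of_card_le_sum _ _ _ (T.singularValues r ^ 2) (by positivity) ?_ ?_
          (fun i => by positivity) ht₁ ?_
        · intro i hi
          exact T.sq_singularValues_antitone (Finset.mem_filter.mp hi).2
        · intro i hi
          exact T.sq_singularValues_antitone (by simp at hi; omega)
        · have := W.finrank_range_add_finrank_ker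
          rw [hsum_t, Fin.card_filter_le_val]
          exact_mod_cast (by omega)
    _ = ∑ a, ‖T (u a)‖ ^ 2 := by
        simp_rw [norm_apply_sq_eq_sum, t, Finset.mul_sum]
        exact Finset.sum_comm
    _ = ∑ a, ‖(T - W) (u a)‖ ^ 2 := by
        congr! 3 with a
        simp [u]
    _ ≤ (T - W).hsNormSq := sum_norm_apply_sq_le_hsNormSq _ hu

theorem exists_finrank_range_le_hsNormSq_sub_eq (T : E →ₗ[𝕜] F) (r : ℕ) :
    ∃ W : E →ₗ[𝕜] F, finrank 𝕜 (range W) ≤ r ∧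
      (T - W).hsNormSq = ∑ q ∈ Finset.Ico r (finrank 𝕜 E), T.singularValues q ^ 2 := by
  classical
  set e := T.rightSingularBasis
  set s := Finset.univ.filter fun i : Fin (finrank 𝕜 E) => i.val < r
  set W := ∑ i ∈ s, (innerₛₗ 𝕜 (e i)).smulRight (T (e i))
  have hW : ∀ j, W (e j) = if j ∈ s then T (e j) else 0 := fun j => by
    simp [W, e.inner_eq_ite]
  refine ⟨W, ?_, ?_⟩
  · have hrange : range W ≤ Submodule.span 𝕜 (s.image fun i => T (e i) : Set F) := by
      rintro _ ⟨x, rfl⟩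
      simp only [W, LinearMap.sum_apply, smulRight_apply]
      exact Submodule.sum_mem _ fun i hi =>
        Submodule.smul_mem _ _ (Submodule.subset_span (Finset.mem_image_of_mem _ hi))
    have hs : s.card ≤ r := by
      calc s.card ≤ (Finset.range r).card :=
            Finset.card_le_card_of_injOn Fin.val (fun i hi => by simpa [s] using hi)
              Fin.val_injective.injOn
        _ = r := Finset.card_range r
    calc finrank 𝕜 (range W) ≤ (s.image fun i => T (e i)).card :=
          (Submodule.finrank_mono hrange).trans (finrank_span_finset_le_card _)
      _ ≤ r := Finset.card_image_le.trans hs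
  · rw [hsNormSq_eq_sum _ e, ← Fin.sum_filter_le_eq_sum_Ico, Finset.sum_filter]
    refine Finset.sum_congr rfl fun j _ => ?_
    rw [sub_apply, hW]
    by_cases hj : r ≤ j.val
    · simp [s, hj, not_lt.mpr hj, norm_apply_rightSingularBasis_sq, e]
    · simp [s, hj, not_le.mp hj]

theorem sum_Ico_sq_singularValues_eq_of_finrank_range_le (T : E →ₗ[𝕜] F) {N : ℕ}
    (hN : finrank 𝕜 (range T) ≤ N) (r : ℕ) :
    ∑ q ∈ Finset.Ico r N, T.singularValues q ^ 2 =
      ∑ q ∈ Finset.Ico r (finrank 𝕜 (range T)), T.singularValues q ^ 2 :=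
  Finset.sum_Ico_eq_sum_Ico_of_eq_zero
    (fun q hq => by simp [T.singularValues_eq_zero_iff_le_finrank_range.mpr hq]) hN r

theorem mul_hsNormSq_sub_le_mul_hsNormSq_sub (T W₁ W₂ : E →ₗ[𝕜] F) {r₀ r₁ r₂ : ℕ}
    (hT : finrank 𝕜 (range T) ≤ r₀) (hW₁ : finrank 𝕜 (range W₁) ≤ r₁)
    (hW₂ : ∀ W : E →ₗ[𝕜] F, finrank 𝕜 (range W) ≤ r₂ → (T - W₂).hsNormSq ≤ (T - W).hsNormSq)
    (h12 : r₁ ≤ r₂) (h20 : r₂ ≤ r₀) :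
    ((r₀ - r₁ : ℕ) : ℝ) * (T - W₂).hsNormSq ≤ ((r₀ - r₂ : ℕ) : ℝ) * (T - W₁).hsNormSq := by
  have tail_eq (r : ℕ) :=
    (T.sum_Ico_sq_singularValues_eq_of_finrank_range_le T.finrank_range_le r).trans
      (T.sum_Ico_sq_singularValues_eq_of_finrank_range_le hT r).symm
  obtain ⟨W, hW, hTW⟩ := T.exists_finrank_range_le_hsNormSq_sub_eq r₂
  have upper := (hW₂ W hW).trans_eq (hTW.trans (tail_eq r₂))
  have lower := (tail_eq r₁).symm.le.trans (T.sum_Ico_sq_singularValues_le_hsNormSq_sub W₁ hW₁)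
  calc ((r₀ - r₁ : ℕ) : ℝ) * (T - W₂).hsNormSq
      ≤ ((r₀ - r₁ : ℕ) : ℝ) * ∑ q ∈ Finset.Ico r₂ r₀, T.singularValues q ^ 2 := by gcongr
    _ ≤ ((r₀ - r₂ : ℕ) : ℝ) * ∑ q ∈ Finset.Ico r₁ r₀, T.singularValues q ^ 2 :=
        T.sq_singularValues_antitone.mul_sum_Ico_le_mul_sum_Ico h12 h20
    _ ≤ ((r₀ - r₂ : ℕ) : ℝ) * (T - W₁).hsNormSq := by gcongr

end LinearMap

section Matrix

open Matrix

variable {m n : Type*} [Fintype m] [Fintype n]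

theorem frob_sub_comm (A B : Matrix m n ℝ) : frob (A - B) = frob (B - A) := by
  simp only [frob, Matrix.sub_apply, ← neg_sub (B _ _), neg_sq]

variable [DecidableEq n]

theorem Matrix.rank_eq_finrank_range_toLpLin (M : Matrix m n ℝ) :
    M.rank = finrank ℝ (range (toLpLin 2 2 M)) :=
  M.rank_eq_finrank_range_toLin (PiLp.basisFun 2 ℝ m) (PiLp.basisFun 2 ℝ n)

theorem frob_eq_sqrt_hsNormSq (M : Matrix m n ℝ) : frob M = √(toLpLin 2 2 M).hsNormSq := by
  rw [frob, hsNormSq_eq_sum _ (EuclideanSpace.basisFun n ℝ), Finset.sum_comm]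
  congr 1
  refine Finset.sum_congr rfl fun j _ => ?_
  simp [EuclideanSpace.real_norm_sq_eq, toLpLin_apply]

end Matrix

theorem stmt2_general {d₁ d₂ : ℕ} (r₀ r₁ r₂ : ℕ) (h12 : r₁ < r₂) (h20 : r₂ < r₀)
    (Z Y P : Matrix (Fin d₁) (Fin d₂) ℝ)
    (hZ : Z.rank ≤ r₀) (hY : Y.rank ≤ r₁)
    (hPbest : ∀ W : Matrix (Fin d₁) (Fin d₂) ℝ, W.rank ≤ r₂ →
      frob (Z - P) ≤ frob (Z - W)) :
    frob (P - Z) ≤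
      Real.sqrt (((r₀ - r₂ : ℕ) : ℝ) / ((r₀ - r₁ : ℕ) : ℝ)) * frob (Y - Z) := by
  set L := Matrix.toLpLin (m := Fin d₁) (n := Fin d₂) (R := ℝ) 2 2
  have hbest (W) (hW : finrank ℝ (range W) ≤ r₂) : (L Z - L P).hsNormSq ≤ (L Z - W).hsNormSq := by
    have h := hPbest (L.symm W) (by rwa [Matrix.rank_eq_finrank_range_toLpLin, L.apply_symm_apply])
    rwa [frob_eq_sqrt_hsNormSq, frob_eq_sqrt_hsNormSq, map_sub, map_sub, L.apply_symm_apply,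
      Real.sqrt_le_sqrt_iff (hsNormSq_nonneg _)] at h
  have key := (L Z).mul_hsNormSq_sub_le_mul_hsNormSq_sub (L Y) (L P)
    (Z.rank_eq_finrank_range_toLpLin ▸ hZ) (Y.rank_eq_finrank_range_toLpLin ▸ hY) hbest
    h12.le h20.le
  have hpos : (0 : ℝ) < ((r₀ - r₁ : ℕ) : ℝ) := by exact_mod_cast (by omega)
  rw [frob_sub_comm P, frob_sub_comm Y, frob_eq_sqrt_hsNormSq, frob_eq_sqrt_hsNormSq, map_sub,
    map_sub, ← Real.sqrt_mul (by positivity)]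
  refine Real.sqrt_le_sqrt ?_
  rw [div_mul_eq_mul_div, le_div_iff₀ hpos]
  linarith

theorem stmt2 {d₁ d₂ : ℕ} (r₀ r₁ r₂ : ℕ) (h12 : r₁ < r₂) (h20 : r₂ < r₀)
    (Z Y P : Matrix (Fin d₁) (Fin d₂) ℝ)
    (hZ : Z.rank ≤ r₀) (hY : Y.rank ≤ r₁)
    (hPrank : P.rank ≤ r₂)
    (hPbest : ∀ W : Matrix (Fin d₁) (Fin d₂) ℝ, W.rank ≤ r₂ →
      frob (Z - P) ≤ frob (Z - W)) :
    frob (P - Z) ≤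
      Real.sqrt (((r₀ - r₂ : ℕ) : ℝ) / ((r₀ - r₁ : ℕ) : ℝ)) * frob (Y - Z) :=
  stmt2_general r₀ r₁ r₂ h12 h20 Z Y P hZ hY hPbest
end

section
/- For a vector v ∈ R^d and s ≤ d, let P̃_s(v) denote the best s-sparse approximation of v in ℓ₂ norm (keeping the s largest-magnitude entries). Then for any s₁ < s₂ < s₀, any vector z ∈ R^d with at most s₀ nonzero entries, and any vector y with at most s₁ nonzero entries: ‖P̃_{s₂}(z) − z‖₂ ≤ sqrt((s₀−s₂)/(s₀−s₁)) · ‖y − z‖₂. -/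
/-!
Let `A` and `Y` be the supports of `z` and `y`. On `S = A \ Y` the vector `y - z` agrees with
`-z`, so `‖y - z‖² ≥ ∑_{i ∈ S} z i²`, and `#S ≥ #A - s₁`. Deleting from `z` the
`#A - s₂` entries of `S` of smallest magnitude leaves an `s₂`-sparse vector `w`, and the deleted
mass is at most the average share `(#A - s₂) / #S` of `∑_{i ∈ S} z i²` (Chebyshev's sum
inequality). Since `t ↦ (t - s₂) / (t - s₁)` is increasing and `#A ≤ s₀`, this share is at most
`(s₀ - s₂) / (s₀ - s₁)`, and `p` is no worse than `w`.
-/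

open Finset

/-- Euclidean norm of a vector in ℝ^d. -/
noncomputable def l2 {d : ℕ} (v : Fin d → ℝ) : ℝ :=
  Real.sqrt (∑ i, (v i) ^ 2)

namespace Finset

variable {ι : Type*} [DecidableEq ι]

theorem exists_subset_card_eq_forall_le (f : ι → ℝ) {k : ℕ} {S : Finset ι} (hk : k ≤ #S) :
    ∃ B ⊆ S, #B = k ∧ ∀ i ∈ B, ∀ j ∈ S \ B, f i ≤ f j := by
  induction k generalizing S with
  | zero => exact ⟨∅, empty_subset _, rfl, by simp⟩
  | succ k ih =>
    obtain ⟨i₀, hi₀, hmin⟩ := S.exists_min_image f (card_pos.mp (by omega))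
    obtain ⟨B, hBS, hBcard, hB⟩ := ih (S := S.erase i₀) (by rw [card_erase_of_mem hi₀]; omega)
    have hi₀B : i₀ ∉ B := fun h ↦ (mem_erase.mp (hBS h)).1 rfl
    refine ⟨insert i₀ B, insert_subset hi₀ (hBS.trans (erase_subset _ _)),
      by rw [card_insert_of_notMem hi₀B, hBcard], ?_⟩
    intro i hi j hj
    obtain ⟨hjS, hjB⟩ := mem_sdiff.mp hj
    rcases mem_insert.mp hi with rfl | hi
    · exact hmin j hjS
    · refine hB i hi j (mem_sdiff.mpr ⟨mem_erase.mpr ⟨?_, hjS⟩, fun h ↦ hjB (mem_insert_of_mem h)⟩)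
      rintro rfl
      exact hjB (mem_insert_self _ _)

theorem exists_subset_card_eq_sum_le (f : ι → ℝ) {k : ℕ} {S : Finset ι} (hk : k ≤ #S) :
    ∃ B ⊆ S, #B = k ∧ ∑ i ∈ B, f i ≤ k / #S * ∑ i ∈ S, f i := by
  obtain ⟨B, hBS, hBcard, hB⟩ := exists_subset_card_eq_forall_le f hk
  refine ⟨B, hBS, hBcard, ?_⟩
  rcases (#S).eq_zero_or_pos with hS | hS
  · simp [card_eq_zero.mp hS, subset_empty.mp (card_eq_zero.mp hS ▸ hBS)]
  set g : ι → ℝ := fun i ↦ if i ∈ B then 1 else 0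
  have hanti : AntivaryOn f g S := by
    intro i hi j hj hgij
    simp only [g] at hgij
    split_ifs at hgij with hiB hjB hjB <;> norm_num at hgij
    exact hB j hjB i (mem_sdiff.mpr ⟨hi, hiB⟩)
  have hchebyshev := hanti.card_mul_sum_le_sum_mul_sum
  simp only [g, mul_ite, mul_one, mul_zero, sum_ite_mem, inter_eq_right.mpr hBS, sum_const,
    nsmul_eq_mul, hBcard] at hchebyshev
  rw [div_mul_eq_mul_div, le_div_iff₀ (by exact_mod_cast hS)]
  linarith

end Finset

theorem sub_div_le_sub_div_sub {a m s₀ s₁ s₂ : ℕ} (h12 : s₁ ≤ s₂) (ha : a ≤ s₀)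
    (hm : a - s₁ ≤ m) :
    ((a - s₂ : ℕ) : ℝ) / m ≤ ((s₀ - s₂ : ℕ) : ℝ) / ((s₀ - s₁ : ℕ) : ℝ) := by
  rcases le_or_gt a s₂ with h2a | ha2
  · rw [Nat.sub_eq_zero_of_le h2a, Nat.cast_zero, zero_div]
    positivity
  have hpos : (0 : ℝ) < ((a - s₁ : ℕ) : ℝ) := by exact_mod_cast Nat.sub_pos_of_lt (by omega)
  calc ((a - s₂ : ℕ) : ℝ) / m ≤ ((a - s₂ : ℕ) : ℝ) / ((a - s₁ : ℕ) : ℝ) :=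
        div_le_div_of_nonneg_left (Nat.cast_nonneg _) hpos (by exact_mod_cast hm)
    _ ≤ ((s₀ - s₂ : ℕ) : ℝ) / ((s₀ - s₁ : ℕ) : ℝ) := by
        rw [div_le_div_iff₀ hpos (by exact_mod_cast Nat.sub_pos_of_lt (by omega))]
        push_cast [Nat.cast_sub ha2.le, Nat.cast_sub (h12.trans ha2.le), Nat.cast_sub ha,
          Nat.cast_sub (ha2.le.trans ha), Nat.cast_sub ((h12.trans ha2.le).trans ha)]
        -- `(s₀ - s₁)(a - s₂) ≤ (a - s₁)(s₀ - s₂)` is `0 ≤ (s₀ - a)(s₂ - s₁)`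
        nlinarith [mul_nonneg (sub_nonneg.mpr (Nat.cast_le.mpr ha) : (0 : ℝ) ≤ s₀ - a)
          (sub_nonneg.mpr (Nat.cast_le.mpr h12) : (0 : ℝ) ≤ s₂ - s₁)]

theorem exists_sparse_sum_sq_sub_le {ι : Type*} [Fintype ι] [DecidableEq ι] (z y : ι → ℝ)
    {s₀ s₁ s₂ : ℕ} (h12 : s₁ ≤ s₂) (hz : #{i | z i ≠ 0} ≤ s₀) (hy : #{i | y i ≠ 0} ≤ s₁) :
    ∃ w : ι → ℝ, #{i | w i ≠ 0} ≤ s₂ ∧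
      ∑ i, (z - w) i ^ 2 ≤ ((s₀ - s₂ : ℕ) : ℝ) / ((s₀ - s₁ : ℕ) : ℝ) * ∑ i, (y - z) i ^ 2 := by
  set A : Finset ι := {i | z i ≠ 0}
  set Y : Finset ι := {i | y i ≠ 0}
  set S : Finset ι := A \ Y
  have hS : #A - s₁ ≤ #S := by
    have : #A ≤ #S + #Y := card_le_card_sdiff_add_card
    omega
  obtain ⟨B, hBS, hBcard, hB⟩ :=
    exists_subset_card_eq_sum_le (fun i ↦ z i ^ 2) (k := #A - s₂) (S := S) (by omega)
  have hBA : B ⊆ A := hBS.trans sdiff_subset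
  set w : ι → ℝ := fun i ↦ if i ∈ B then 0 else z i
  refine ⟨w, ?_, ?_⟩
  · calc #{i | w i ≠ 0} ≤ #(A \ B) := by
          refine card_le_card fun i hi ↦ ?_
          by_cases hiB : i ∈ B <;> simp_all [A, w]
      _ ≤ s₂ := by rw [card_sdiff_of_subset hBA]; omega
  have hzw : ∑ i, (z - w) i ^ 2 = ∑ i ∈ B, z i ^ 2 := by
    rw [← sum_subset (subset_univ B)]
    · refine sum_congr rfl fun i hi ↦ ?_
      simp [w, hi]
    · intro i _ hi
      simp [w, hi]
  have hyz : ∑ i ∈ S, z i ^ 2 ≤ ∑ i, (y - z) i ^ 2 := by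
    calc ∑ i ∈ S, z i ^ 2 = ∑ i ∈ S, (y - z) i ^ 2 :=
          sum_congr rfl fun i hi ↦ by simp_all [S, Y]
      _ ≤ ∑ i, (y - z) i ^ 2 :=
          sum_le_sum_of_subset_of_nonneg (subset_univ S) fun i _ _ ↦ sq_nonneg _
  rw [hzw]
  calc ∑ i ∈ B, z i ^ 2 ≤ ((#A - s₂ : ℕ) : ℝ) / #S * ∑ i ∈ S, z i ^ 2 := hB
    _ ≤ ((s₀ - s₂ : ℕ) : ℝ) / ((s₀ - s₁ : ℕ) : ℝ) * ∑ i, (y - z) i ^ 2 :=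
        mul_le_mul (sub_div_le_sub_div_sub h12 hz hS) hyz (sum_nonneg fun i _ ↦ sq_nonneg _)
          (by positivity)

theorem ncard_setOf_ne_zero {ι : Type*} [Fintype ι] (v : ι → ℝ) :
    {i | v i ≠ 0}.ncard = #{i | v i ≠ 0} := by
  rw [Set.ncard_eq_toFinset_card', Set.toFinset_ofPred]

theorem l2_sub_comm {d : ℕ} (u v : Fin d → ℝ) : l2 (u - v) = l2 (v - u) := by
  rw [l2, l2, ← neg_sub v u]
  simp only [Pi.neg_apply, neg_sq]

theorem stmt3_general {d : ℕ} (s₀ s₁ s₂ : ℕ) (h12 : s₁ < s₂)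
    (z y p : Fin d → ℝ)
    (hz : {i | z i ≠ 0}.ncard ≤ s₀) (hy : {i | y i ≠ 0}.ncard ≤ s₁)
    (hbest : ∀ w : Fin d → ℝ, {i | w i ≠ 0}.ncard ≤ s₂ → l2 (z - p) ≤ l2 (z - w)) :
    l2 (p - z) ≤
      Real.sqrt (((s₀ - s₂ : ℕ) : ℝ) / ((s₀ - s₁ : ℕ) : ℝ)) * l2 (y - z) := by
  obtain ⟨w, hw, hzw⟩ := exists_sparse_sum_sq_sub_le z y h12.le
    ((ncard_setOf_ne_zero z).symm.trans_le hz) ((ncard_setOf_ne_zero y).symm.trans_le hy)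
  calc l2 (p - z) = l2 (z - p) := l2_sub_comm p z
    _ ≤ l2 (z - w) := hbest w ((ncard_setOf_ne_zero w).trans_le hw)
    _ ≤ Real.sqrt (((s₀ - s₂ : ℕ) : ℝ) / ((s₀ - s₁ : ℕ) : ℝ)) * l2 (y - z) := by
        rw [l2, l2, ← Real.sqrt_mul (by positivity)]
        exact Real.sqrt_le_sqrt hzw

theorem stmt3 {d : ℕ} (s₀ s₁ s₂ : ℕ) (h12 : s₁ < s₂) (h20 : s₂ < s₀)
    (z y p : Fin d → ℝ)
    (hz : {i | z i ≠ 0}.ncard ≤ s₀) (hy : {i | y i ≠ 0}.ncard ≤ s₁)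
    (hp : {i | p i ≠ 0}.ncard ≤ s₂)
    (hbest : ∀ w : Fin d → ℝ, {i | w i ≠ 0}.ncard ≤ s₂ → l2 (z - p) ≤ l2 (z - w)) :
    l2 (p - z) ≤
      Real.sqrt (((s₀ - s₂ : ℕ) : ℝ) / ((s₀ - s₁ : ℕ) : ℝ)) * l2 (y - z) :=
  stmt3_general s₀ s₁ s₂ h12 z y p hz hy hbest
end

section
/- Let Θ₂(r,s) be the set of tensors A ∈ R^{d₁×d₂×d₃} such that every slice A_{··j₃} has rank at most r and at most s slices A_{··j₃} are nonzero. Define P_{Θ₂(r,s)}(Z) by first replacing each slice of Z with its best rank-r approximation and then zeroing all but the s slices of largest Frobenius norm. Then for r₁ < r₂ < r₀ and s₁ < s₂ < s₀, for any Z ∈ Θ₂(r₀,s₀) and Y ∈ Θ₂(r₁,s₁): ‖P_{Θ₂(r₂,s₂)}(Z) − Z‖_F ≤ (α + β + αβ)·‖Y − Z‖_F, where α = sqrt((s₀−s₂)/(s₀−s₁)) and β = sqrt((r₀−r₂)/(r₀−r₁)). -/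
/-- Frobenius norm of a real matrix. -/
noncomputable def frobM {m n : Type*} [Fintype m] [Fintype n] (M : Matrix m n ℝ) : ℝ :=
  Real.sqrt (∑ i, ∑ j, (M i j) ^ 2)

/-- Frobenius norm of an order-3 tensor, represented by its `(1,2)`-slices. -/
noncomputable def frobT {d₁ d₂ d₃ : ℕ} (A : Fin d₃ → Matrix (Fin d₁) (Fin d₂) ℝ) : ℝ :=
  Real.sqrt (∑ j, ∑ i, ∑ k, (A j i k) ^ 2)

/-- Membership in Θ₂(r,s): every slice has rank at most `r`, and at most `s`
slices are nonzero. -/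
def memTheta2 {d₁ d₂ d₃ : ℕ} (A : Fin d₃ → Matrix (Fin d₁) (Fin d₂) ℝ) (r s : ℕ) : Prop :=
  (∀ j, (A j).rank ≤ r) ∧ {j | A j ≠ 0}.ncard ≤ s

open Matrix Finset

noncomputable def F2 {m n : Type*} [Fintype m] [Fintype n] (M : Matrix m n ℝ) : ℝ :=
  ∑ i, ∑ j, (M i j) ^ 2

section F2lemmas
variable {m n : Type*} [Fintype m] [Fintype n]

lemma F2_nonneg (M : Matrix m n ℝ) : 0 ≤ F2 M :=
  Finset.sum_nonneg fun _ _ => Finset.sum_nonneg fun _ _ => sq_nonneg _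

lemma F2_zero : F2 (0 : Matrix m n ℝ) = 0 := by simp [F2]

lemma F2_neg (M : Matrix m n ℝ) : F2 (-M) = F2 M := by simp [F2]

lemma F2_sub_comm (M N : Matrix m n ℝ) : F2 (M - N) = F2 (N - M) := by
  rw [← F2_neg (M - N), neg_sub]

lemma F2_eq_zero_iff {M : Matrix m n ℝ} : F2 M = 0 ↔ M = 0 := by
  constructor
  · intro h
    ext i j
    have h1 : ∀ i ∈ Finset.univ, (0:ℝ) ≤ ∑ j, (M i j)^2 :=
      fun _ _ => Finset.sum_nonneg fun _ _ => sq_nonneg _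
    have h2 := (Finset.sum_eq_zero_iff_of_nonneg h1).1 h i (Finset.mem_univ i)
    have h3 := (Finset.sum_eq_zero_iff_of_nonneg
      (fun k (_ : k ∈ Finset.univ) => sq_nonneg (M i k))).1 h2 j (Finset.mem_univ j)
    simpa using pow_eq_zero_iff (n := 2) (by norm_num) |>.1 h3
  · rintro rfl; exact F2_zero

lemma F2_eq_trace (M : Matrix m n ℝ) : F2 M = Matrix.trace (Mᵀ * M) := by
  simp only [Matrix.trace, Matrix.diag, Matrix.mul_apply, Matrix.transpose_apply, F2]
  rw [Finset.sum_comm]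
  simp [sq]

end F2lemmas

lemma frobM_eq {m n : Type*} [Fintype m] [Fintype n] (M : Matrix m n ℝ) :
    frobM M = Real.sqrt (F2 M) := rfl

lemma F2_le_of_frobM_le {m n : Type*} [Fintype m] [Fintype n] {M N : Matrix m n ℝ}
    (h : frobM M ≤ frobM N) : F2 M ≤ F2 N := by
  rw [frobM_eq, frobM_eq] at h
  calc F2 M = Real.sqrt (F2 M) ^ 2 := (Real.sq_sqrt (F2_nonneg M)).symm
    _ ≤ Real.sqrt (F2 N) ^ 2 := by
        exact pow_le_pow_left₀ (Real.sqrt_nonneg _) h 2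
    _ = F2 N := Real.sq_sqrt (F2_nonneg N)

lemma trace_diagonal_mul {n : Type*} [Fintype n] [DecidableEq n] (w : n → ℝ)
    (M : Matrix n n ℝ) : Matrix.trace (Matrix.diagonal w * M) = ∑ i, w i * M i i := by
  simp [Matrix.trace, Matrix.diag, Matrix.mul_apply, Matrix.diagonal]

lemma trace_conj {n : Type*} [Fintype n] [DecidableEq n] (V M : Matrix n n ℝ)
    (hV : V * Vᵀ = 1) : Matrix.trace (Vᵀ * M * V) = Matrix.trace M := by
  rw [Matrix.trace_mul_cycle, hV, Matrix.one_mul]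

lemma F2_mul_orthR {m n : Type*} [Fintype m] [Fintype n] [DecidableEq n] (M : Matrix m n ℝ)
    (Q : Matrix n n ℝ) (hQ : Q * Qᵀ = 1) : F2 (M * Q) = F2 M := by
  rw [F2_eq_trace, F2_eq_trace, Matrix.transpose_mul, Matrix.mul_assoc,
    Matrix.trace_mul_comm, Matrix.mul_assoc, Matrix.mul_assoc, hQ, Matrix.mul_one,
    Matrix.trace_mul_comm]

lemma F2_mul_proj {m n : Type*} [Fintype m] [Fintype n] [DecidableEq n] (M : Matrix m n ℝ)
    {Pr : Matrix n n ℝ} (hsym : Prᵀ = Pr) (hidem : Pr * Pr = Pr) :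
    F2 (M * Pr) = Matrix.trace (Mᵀ * M * Pr) := by
  rw [F2_eq_trace, Matrix.transpose_mul, hsym]
  rw [show Pr * Mᵀ * (M * Pr) = Pr * (Mᵀ * M * Pr) by simp only [Matrix.mul_assoc]]
  rw [Matrix.trace_mul_comm, Matrix.mul_assoc, Matrix.mul_assoc, hidem, ← Matrix.mul_assoc]

lemma F2_mul_proj_le {m n : Type*} [Fintype m] [Fintype n] [DecidableEq n] (M : Matrix m n ℝ)
    {Pr : Matrix n n ℝ} (hsym : Prᵀ = Pr) (hidem : Pr * Pr = Pr) :
    F2 (M * Pr) ≤ F2 M := by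
  have hsym' : (1 - Pr)ᵀ = 1 - Pr := by rw [Matrix.transpose_sub, Matrix.transpose_one, hsym]
  have hidem' : (1 - Pr) * (1 - Pr) = 1 - Pr := by
    simp only [Matrix.mul_sub, Matrix.sub_mul, Matrix.one_mul, Matrix.mul_one, hidem]
    abel_nf
  have h := F2_nonneg (M * (1 - Pr))
  rw [F2_mul_proj M hsym' hidem'] at h
  rw [F2_mul_proj M hsym hidem]
  have : F2 M = Matrix.trace (Mᵀ * M * Pr) + Matrix.trace (Mᵀ * M * (1 - Pr)) := by
    rw [← Matrix.trace_add, ← Matrix.mul_add, add_sub_cancel, Matrix.mul_one, F2_eq_trace]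
  linarith

/-- Existence of a "top-k" selection set. -/
lemma exists_top {ι : Type*} [Fintype ι] [DecidableEq ι] (μ : ι → ℝ) (k : ℕ) :
    ∃ T : Finset ι, T.card = min k (Fintype.card ι) ∧
      ∀ i ∈ T, ∀ j, j ∉ T → μ j ≤ μ i := by
  induction k with
  | zero => exact ⟨∅, by simp, by simp⟩
  | succ k ih =>
    obtain ⟨T, hc, hs⟩ := ih
    by_cases hT : T = Finset.univ
    · refine ⟨T, ?_, hs⟩
      have : Fintype.card ι ≤ k := by
        have := hc; rw [hT, Finset.card_univ] at this; omega
      rw [hc]; omega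
    · have hne : (Finset.univ \ T).Nonempty := by
        rw [Finset.sdiff_nonempty]; intro h
        exact hT (Finset.univ_subset_iff.1 h)
      obtain ⟨j₀, hj₀, hmax⟩ := Finset.exists_max_image _ μ hne
      have hj₀T : j₀ ∉ T := (Finset.mem_sdiff.1 hj₀).2
      have hcardlt : T.card < Fintype.card ι := by
        rw [← Finset.card_univ]
        exact Finset.card_lt_card (Finset.ssubset_univ_iff.2 hT)
      refine ⟨insert j₀ T, ?_, ?_⟩
      · rw [Finset.card_insert_of_notMem hj₀T, hc]; omega
      · intro i hi j hj
        have hjT : j ∉ T := fun h => hj (Finset.mem_insert_of_mem h)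
        rcases Finset.mem_insert.1 hi with rfl | hiT
        · exact hmax j (Finset.mem_sdiff.2 ⟨Finset.mem_univ j, hjT⟩)
        · exact hs i hiT j hjT

/-- Abstract counting lemma. -/
lemma lemA {ι : Type*} [Fintype ι] [DecidableEq ι] (μ p : ι → ℝ) (r₀ r₁ r₂ : ℕ)
    (hr12 : r₁ < r₂) (hr20 : r₂ < r₀)
    (hμ : ∀ i, 0 ≤ μ i) (hp0 : ∀ i, 0 ≤ p i) (hp1 : ∀ i, p i ≤ 1)
    (hsupp : {i | μ i ≠ 0}.ncard ≤ r₀)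
    (hpsum : (Fintype.card ι : ℝ) - r₁ ≤ ∑ i, p i)
    (Top : Finset ι) (hTc : Top.card = min r₂ (Fintype.card ι))
    (hTsel : ∀ i ∈ Top, ∀ j, j ∉ Top → μ j ≤ μ i) :
    ∑ i ∈ Topᶜ, μ i ≤ (((r₀ - r₂ : ℕ):ℝ) / ((r₀ - r₁ : ℕ):ℝ)) * ∑ i, μ i * p i := by
  classical
  set c : ℝ := ((r₀ - r₂ : ℕ):ℝ) / ((r₀ - r₁ : ℕ):ℝ) with hc
  have hden : (0:ℝ) < ((r₀ - r₁ : ℕ):ℝ) := by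
    have : 0 < r₀ - r₁ := by omega
    exact_mod_cast this
  have hc0 : 0 ≤ c := div_nonneg (Nat.cast_nonneg _) hden.le
  have hc1 : c ≤ 1 := by
    rw [hc, div_le_one hden]
    exact_mod_cast Nat.sub_le_sub_left hr12.le r₀
  have hμp : 0 ≤ ∑ i, μ i * p i :=
    Finset.sum_nonneg fun i _ => mul_nonneg (hμ i) (hp0 i)
  by_cases hall : ∀ j, j ∉ Top → μ j = 0
  · have : ∑ i ∈ Topᶜ, μ i = 0 :=
      Finset.sum_eq_zero fun i hi => hall i (Finset.mem_compl.1 hi)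
    rw [this]
    exact mul_nonneg hc0 hμp
  push_neg at hall
  obtain ⟨j₀, hj₀T, hj₀⟩ := hall
  have hμj₀ : 0 < μ j₀ := (hμ j₀).lt_of_ne (Ne.symm hj₀)
  have hToppos : ∀ i ∈ Top, 0 < μ i := fun i hi => hμj₀.trans_le (hTsel i hi j₀ hj₀T)
  -- Top has card r₂
  have hTopcard : Top.card = r₂ := by
    have h1 : Top.card < Fintype.card ι := by
      rw [← Finset.card_univ]
      refine Finset.card_lt_card (Finset.ssubset_univ_iff.2 ?_)
      intro h; exact hj₀T (h ▸ Finset.mem_univ j₀)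
    omega
  -- support finset
  set supp : Finset ι := Finset.univ.filter (fun i => μ i ≠ 0) with hsuppdef
  have hmemsupp : ∀ i, i ∈ supp ↔ μ i ≠ 0 := by
    intro i; simp [hsuppdef]
  have hsuppcard : supp.card ≤ r₀ := by
    have : {i | μ i ≠ 0} = ↑supp := by ext i; simp [hsuppdef]
    rw [this, Set.ncard_coe_finset] at hsupp
    exact hsupp
  have hTopsupp : Top ⊆ supp := fun i hi => (hmemsupp i).2 (hToppos i hi).ne'
  set R : Finset ι := supp \ Top with hR
  have hsuppeq : supp = Top ∪ R := (Finset.union_sdiff_of_subset hTopsupp).symm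
  have hdisj : Disjoint Top R := Finset.disjoint_sdiff
  have hRcard : R.card ≤ r₀ - r₂ := by
    have : supp.card = Top.card + R.card := by
      rw [hsuppeq, Finset.card_union_of_disjoint hdisj]
    omega
  -- rewrite LHS as sum over R
  have hLHS : ∑ i ∈ Topᶜ, μ i = ∑ i ∈ R, μ i := by
    refine (Finset.sum_subset ?_ ?_).symm
    · intro i hi
      exact Finset.mem_compl.2 (Finset.mem_sdiff.1 hi).2
    · intro i hi hiR
      by_contra h
      exact hiR (Finset.mem_sdiff.2 ⟨(hmemsupp i).2 h, Finset.mem_compl.1 hi⟩)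
  rw [hLHS]
  -- min of μ on Top
  have hTopne : Top.Nonempty := by
    rw [← Finset.card_pos, hTopcard]; omega
  obtain ⟨i₀, hi₀, hmin⟩ := Finset.exists_min_image Top μ hTopne
  set m : ℝ := μ i₀ with hm
  have hm0 : 0 < m := hToppos i₀ hi₀
  have hRlem : ∀ j ∈ R, μ j ≤ m := fun j hj => hTsel i₀ hi₀ j (Finset.mem_sdiff.1 hj).2
  -- key counting inequality
  have hkey : (R.card : ℝ) ≤ c * ∑ i ∈ supp, p i := by
    have hsuppsum : (R.card : ℝ) + r₂ - r₁ ≤ ∑ i ∈ supp, p i := by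
      have hsplit : ∑ i, p i = ∑ i ∈ supp, p i + ∑ i ∈ suppᶜ, p i := by
        rw [Finset.sum_add_sum_compl]
      have hcompl : ∑ i ∈ suppᶜ, p i ≤ (suppᶜ.card : ℝ) := by
        calc ∑ i ∈ suppᶜ, p i ≤ ∑ i ∈ suppᶜ, 1 := Finset.sum_le_sum fun i _ => hp1 i
          _ = (suppᶜ.card : ℝ) := by simp
      have hcc : (suppᶜ.card : ℝ) = Fintype.card ι - supp.card := by
        rw [Finset.card_compl]
        have := Finset.card_le_univ supp
        push_cast [Nat.cast_sub (by simpa using this)]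
        ring
      have hsc : (supp.card : ℝ) = r₂ + R.card := by
        rw [hsuppeq, Finset.card_union_of_disjoint hdisj, hTopcard]; push_cast; ring
      have := hpsum
      rw [hsplit] at this
      rw [hcc, hsc] at hcompl
      linarith
    have hr12' : (r₁:ℝ) < r₂ := by exact_mod_cast hr12
    have hr20' : (r₂:ℝ) < r₀ := by exact_mod_cast hr20
    have hineq : (R.card : ℝ) * ((r₀:ℝ) - r₁) ≤ ((r₀:ℝ) - r₂) * ((R.card:ℝ) + r₂ - r₁) := by
      have h1 : (R.card : ℝ) ≤ (r₀:ℝ) - r₂ := by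
        have h2 : ((r₀ - r₂ : ℕ):ℝ) = (r₀:ℝ) - r₂ := by
          push_cast [Nat.cast_sub hr20.le]; ring
        rw [← h2]
        exact_mod_cast hRcard
      nlinarith
    have hnum : ((r₀ - r₂ : ℕ):ℝ) = (r₀:ℝ) - r₂ := by push_cast [Nat.cast_sub hr20.le]; ring
    have hden' : ((r₀ - r₁ : ℕ):ℝ) = (r₀:ℝ) - r₁ := by
      push_cast [Nat.cast_sub (hr12.trans hr20).le]; ring
    have hden2 : (0:ℝ) < (r₀:ℝ) - r₁ := by linarith
    have step1 : (R.card : ℝ) ≤ c * ((R.card:ℝ) + r₂ - r₁) := by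
      rw [hc, hnum, hden', div_mul_eq_mul_div, le_div_iff₀ hden2]
      nlinarith
    calc (R.card : ℝ) ≤ c * ((R.card:ℝ) + r₂ - r₁) := step1
      _ ≤ c * ∑ i ∈ supp, p i := by
          apply mul_le_mul_of_nonneg_left _ hc0
          linarith [hsuppsum]
  -- main chain
  have hsplit2 : ∑ i ∈ supp, p i = ∑ i ∈ Top, p i + ∑ i ∈ R, p i := by
    rw [hsuppeq, Finset.sum_union hdisj]
  have hcp : ∀ i, 0 ≤ 1 - c * p i := by
    intro i
    have : c * p i ≤ 1 * 1 := mul_le_mul hc1 (hp1 i) (hp0 i) zero_le_one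
    linarith
  have hB1 : ∑ j ∈ R, μ j * (1 - c * p j) ≤ m * ((R.card:ℝ) - c * ∑ j ∈ R, p j) := by
    calc ∑ j ∈ R, μ j * (1 - c * p j) ≤ ∑ j ∈ R, m * (1 - c * p j) :=
          Finset.sum_le_sum fun j hj => mul_le_mul_of_nonneg_right (hRlem j hj) (hcp j)
      _ = m * ((R.card:ℝ) - c * ∑ j ∈ R, p j) := by
          rw [← Finset.mul_sum]
          congr 1
          rw [Finset.sum_sub_distrib, ← Finset.mul_sum]
          simp
  have hB2 : m * ((R.card:ℝ) - c * ∑ j ∈ R, p j) ≤ c * m * ∑ i ∈ Top, p i := by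
    have := hkey
    rw [hsplit2] at this
    nlinarith [hm0.le, Finset.sum_nonneg (fun i (_ : i ∈ Top) => hp0 i),
      Finset.sum_nonneg (fun i (_ : i ∈ R) => hp0 i)]
  have hB3 : c * m * ∑ i ∈ Top, p i ≤ c * ∑ i ∈ Top, μ i * p i := by
    rw [mul_assoc]
    apply mul_le_mul_of_nonneg_left _ hc0
    rw [Finset.mul_sum]
    apply Finset.sum_le_sum
    intro i hi
    exact mul_le_mul_of_nonneg_right (hmin i hi) (hp0 i)
  have hfinal : ∑ i ∈ R, μ i ≤ c * (∑ i ∈ Top, μ i * p i + ∑ i ∈ R, μ i * p i) := by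
    have hdecomp : ∑ i ∈ R, μ i
        = ∑ j ∈ R, μ j * (1 - c * p j) + c * ∑ j ∈ R, μ j * p j := by
      rw [Finset.mul_sum, ← Finset.sum_add_distrib]
      apply Finset.sum_congr rfl
      intro j _; ring
    rw [hdecomp]
    have := hB1.trans (hB2.trans hB3)
    rw [mul_add]
    linarith
  refine hfinal.trans ?_
  apply mul_le_mul_of_nonneg_left _ hc0
  rw [← Finset.sum_union hdisj, ← hsuppeq]
  apply Finset.sum_le_sum_of_subset_of_nonneg (Finset.subset_univ _)
  intro i _ _
  exact mul_nonneg (hμ i) (hp0 i)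




/-- Spectral decomposition of the Gram matrix `Aᵀ * A`. -/
lemma specG {m n : ℕ} (A : Matrix (Fin m) (Fin n) ℝ) :
    ∃ (V : Matrix (Fin n) (Fin n) ℝ) (μ : Fin n → ℝ),
      V * Vᵀ = 1 ∧ Vᵀ * V = 1 ∧ Aᵀ * A = V * Matrix.diagonal μ * Vᵀ ∧
      (∀ i, 0 ≤ μ i) ∧ {i | μ i ≠ 0}.ncard = A.rank := by
  classical
  have hG : (Aᵀ * A).IsHermitian := by
    rw [show Aᵀ = Aᴴ from (Matrix.conjTranspose_eq_transpose_of_trivial A).symm]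
    exact Matrix.isHermitian_conjTranspose_mul_self A
  refine ⟨(hG.eigenvectorUnitary : Matrix (Fin n) (Fin n) ℝ), hG.eigenvalues, ?_, ?_, ?_, ?_, ?_⟩
  · have := (Matrix.mem_unitaryGroup_iff).mp hG.eigenvectorUnitary.2
    simpa [Matrix.star_eq_conjTranspose, Matrix.conjTranspose_eq_transpose_of_trivial] using this
  · have := (Matrix.mem_unitaryGroup_iff').mp hG.eigenvectorUnitary.2
    simpa [Matrix.star_eq_conjTranspose, Matrix.conjTranspose_eq_transpose_of_trivial] using this
  · have h := hG.spectral_theorem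
    simpa [Matrix.star_eq_conjTranspose, Matrix.conjTranspose_eq_transpose_of_trivial,
      Function.comp] using h
  · intro i
    have hPSD : (Aᵀ * A).PosSemidef := by
      rw [show Aᵀ = Aᴴ from (Matrix.conjTranspose_eq_transpose_of_trivial A).symm]
      exact Matrix.posSemidef_conjTranspose_mul_self A
    exact hPSD.eigenvalues_nonneg i
  · have h1 : (Aᵀ * A).rank = A.rank := Matrix.rank_transpose_mul_self A
    have h2 := hG.rank_eq_card_non_zero_eigs
    rw [← h1, h2, Set.ncard_eq_toFinset_card', Set.toFinset_card]
    rfl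

lemma rankApprox {m n : ℕ} (r₀ r₁ r₂ : ℕ) (hr12 : r₁ < r₂) (hr20 : r₂ < r₀)
    (A B : Matrix (Fin m) (Fin n) ℝ) (hA : A.rank ≤ r₀) (hB : B.rank ≤ r₁) :
    ∃ W : Matrix (Fin m) (Fin n) ℝ, W.rank ≤ r₂ ∧
      F2 (A - W) ≤ ((r₀ - r₂ : ℕ):ℝ)/((r₀ - r₁:ℕ):ℝ) * F2 (A - B) := by
  classical
  obtain ⟨V, μ, hVVt, hVtV, hGspec, hμ0, hμcard⟩ := specG A
  obtain ⟨V', ν, hV'Vt, hV'tV, hHspec, hν0, hνcard⟩ := specG B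
  set c : ℝ := ((r₀ - r₂ : ℕ):ℝ) / ((r₀ - r₁ : ℕ):ℝ) with hc
  have hc0 : 0 ≤ c := div_nonneg (Nat.cast_nonneg _) (Nat.cast_nonneg _)
  -- the projection onto the kernel of B
  set e0 : Fin n → ℝ := fun i => if ν i = 0 then (1:ℝ) else 0 with he0
  set E0 : Matrix (Fin n) (Fin n) ℝ := Matrix.diagonal e0 with hE0
  set Pm : Matrix (Fin n) (Fin n) ℝ := V' * E0 * V'ᵀ with hPm
  have hE0idem : E0 * E0 = E0 := by
    rw [hE0, Matrix.diagonal_mul_diagonal]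
    have h : (fun i => e0 i * e0 i) = e0 := by
      funext i; by_cases h : ν i = 0 <;> simp [he0, h]
    rw [h]
  have hE0sym : E0ᵀ = E0 := Matrix.diagonal_transpose _
  have hPsym : Pmᵀ = Pm := by
    rw [hPm, Matrix.transpose_mul, Matrix.transpose_mul, Matrix.transpose_transpose, hE0sym,
      Matrix.mul_assoc]
  have hVEV : ∀ D D' : Matrix (Fin n) (Fin n) ℝ,
      (V' * D * V'ᵀ) * (V' * D' * V'ᵀ) = V' * (D * D') * V'ᵀ := by
    intro D D'
    have h1 : V' * D * V'ᵀ * (V' * D' * V'ᵀ) = V' * D * (V'ᵀ * V') * (D' * V'ᵀ) := by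
      simp only [Matrix.mul_assoc]
    rw [h1, hV'tV, Matrix.mul_one, Matrix.mul_assoc V' D, Matrix.mul_assoc V',
      Matrix.mul_assoc D D' V'ᵀ]
  have hPidem : Pm * Pm = Pm := by rw [hPm, hVEV, hE0idem]
  have hBP : B * Pm = 0 := by
    have hz : Matrix.diagonal ν * E0 = 0 := by
      rw [hE0, Matrix.diagonal_mul_diagonal]
      have hz2 : (fun i => ν i * e0 i) = fun _ => (0:ℝ) := by
        funext i; by_cases h : ν i = 0 <;> simp [he0, h]
      rw [hz2, Matrix.diagonal_zero]
    have hF2 : F2 (B * Pm) = 0 := by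
      rw [F2_mul_proj B hPsym hPidem]
      have h3 : Bᵀ * B * Pm = V' * (Matrix.diagonal ν * E0) * V'ᵀ := by
        rw [hHspec, hPm, hVEV]
      rw [h3, hz]
      simp
    exact F2_eq_zero_iff.1 hF2
  -- the weights p
  set p : Fin n → ℝ := fun i => (Vᵀ * Pm * V) i i with hpdef
  have hdiag_nonneg : ∀ (Q : Matrix (Fin n) (Fin n) ℝ), Qᵀ = Q → Q * Q = Q →
      ∀ i, 0 ≤ (Vᵀ * Q * V) i i := by
    intro Q hs hi i
    have h1 : (Q * V)ᵀ * (Q * V) = Vᵀ * Q * V := by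
      rw [Matrix.transpose_mul, hs, Matrix.mul_assoc, ← Matrix.mul_assoc Q Q V, hi,
        ← Matrix.mul_assoc]
    rw [← h1, Matrix.mul_apply]
    apply Finset.sum_nonneg; intro k _
    rw [Matrix.transpose_apply]
    exact mul_self_nonneg _
  have hp0 : ∀ i, 0 ≤ p i := fun i => hdiag_nonneg Pm hPsym hPidem i
  have hQsym : (1 - Pm)ᵀ = 1 - Pm := by
    rw [Matrix.transpose_sub, Matrix.transpose_one, hPsym]
  have hQidem : (1 - Pm) * (1 - Pm) = 1 - Pm := by
    simp only [Matrix.mul_sub, Matrix.sub_mul, Matrix.one_mul, Matrix.mul_one, hPidem]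
    abel_nf
  have hp1 : ∀ i, p i ≤ 1 := by
    intro i
    have h1 := hdiag_nonneg (1 - Pm) hQsym hQidem i
    have h2 : Vᵀ * (1 - Pm) * V = 1 - Vᵀ * Pm * V := by
      rw [Matrix.mul_sub, Matrix.sub_mul, Matrix.mul_one, hVtV]
    rw [h2, Matrix.sub_apply, Matrix.one_apply_eq] at h1
    have : p i = (Vᵀ * Pm * V) i i := rfl
    linarith
  -- trace of Pm
  have hrankfilter : (Finset.univ.filter (fun i => ν i ≠ 0)).card = B.rank := by
    rw [← hνcard, ← Set.ncard_coe_finset]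
    congr 1; ext i; simp
  have hcardsplit : (Finset.univ.filter (fun i => ν i = 0)).card
      + (Finset.univ.filter (fun i => ν i ≠ 0)).card = n := by
    rw [Finset.card_filter_add_card_filter_not, Finset.card_univ, Fintype.card_fin]
  have htrPm : Matrix.trace Pm = ((Finset.univ.filter (fun i => ν i = 0)).card : ℝ) := by
    rw [hPm, Matrix.trace_mul_cycle, hV'tV, Matrix.one_mul, hE0, Matrix.trace_diagonal]
    simp [he0]
  have hpsum : ((Fintype.card (Fin n)) : ℝ) - r₁ ≤ ∑ i, p i := by
    have h1 : ∑ i, p i = Matrix.trace (Vᵀ * Pm * V) := by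
      simp [Matrix.trace, Matrix.diag, hpdef]
    rw [h1, trace_conj V Pm hVVt, htrPm, Fintype.card_fin]
    have h2 : B.rank ≤ r₁ := hB
    have h3 : B.rank ≤ n := Matrix.rank_le_width B
    have h4 : (Finset.univ.filter (fun i => ν i = 0)).card = n - B.rank := by omega
    rw [h4]
    have h5 : ((n - B.rank : ℕ) : ℝ) = (n:ℝ) - B.rank := by
      push_cast [Nat.cast_sub h3]; ring
    rw [h5]
    have : (B.rank : ℝ) ≤ (r₁:ℝ) := by exact_mod_cast h2
    linarith
  -- ∑ μ p = F2 ((A-B) Pm) ≤ F2 (A-B)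
  have hμpsum : ∑ i, μ i * p i = F2 ((A - B) * Pm) := by
    have h1 : ∑ i, μ i * p i = Matrix.trace (Matrix.diagonal μ * (Vᵀ * Pm * V)) := by
      rw [trace_diagonal_mul]
    have h2 : Matrix.diagonal μ * (Vᵀ * Pm * V) = Matrix.diagonal μ * (Vᵀ * Pm) * V := by
      simp only [Matrix.mul_assoc]
    have h3 : Matrix.trace (Matrix.diagonal μ * (Vᵀ * Pm) * V)
        = Matrix.trace (V * Matrix.diagonal μ * Vᵀ * Pm) := by
      rw [Matrix.trace_mul_cycle]
      simp only [Matrix.mul_assoc]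
    have h4 : (A - B) * Pm = A * Pm := by rw [Matrix.sub_mul, hBP, sub_zero]
    rw [h1, h2, h3, ← hGspec, h4, F2_mul_proj A hPsym hPidem]
  have hμple : ∑ i, μ i * p i ≤ F2 (A - B) := by
    rw [hμpsum]
    exact F2_mul_proj_le (A - B) hPsym hPidem
  -- top selection and the approximant W
  obtain ⟨Top, hTc, hTsel⟩ := exists_top μ r₂
  set e1 : Fin n → ℝ := fun i => if i ∈ Top then (0:ℝ) else 1 with he1
  set ETop : Matrix (Fin n) (Fin n) ℝ :=
    Matrix.diagonal (fun i => if i ∈ Top then (1:ℝ) else 0) with hETop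
  refine ⟨A * V * ETop * Vᵀ, ?_, ?_⟩
  · calc (A * V * ETop * Vᵀ).rank ≤ (A * V * ETop).rank := Matrix.rank_mul_le_left _ _
      _ ≤ ETop.rank := Matrix.rank_mul_le_right _ _
      _ = Top.card := by
          rw [hETop, Matrix.rank_diagonal, Fintype.card_subtype]
          congr 1
          ext i
          by_cases h : i ∈ Top <;> simp [h]
      _ ≤ r₂ := by rw [hTc]; exact min_le_left _ _
  · have hE1 : (1 : Matrix (Fin n) (Fin n) ℝ) - ETop = Matrix.diagonal e1 := by
      ext i j
      by_cases hij : i = j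
      · subst hij
        by_cases h : i ∈ Top <;>
          simp [hETop, he1, Matrix.sub_apply, Matrix.one_apply, h]
      · simp [hETop, he1, Matrix.sub_apply, Matrix.one_apply, Matrix.diagonal_apply_ne _ hij, hij]
    have hAW : A - A * V * ETop * Vᵀ = (A * V * (1 - ETop)) * Vᵀ := by
      have h : (A * V * (1 - ETop)) * Vᵀ = A * V * Vᵀ - A * V * ETop * Vᵀ := by
        rw [Matrix.mul_sub, Matrix.mul_one, Matrix.sub_mul]
      rw [h, Matrix.mul_assoc A V Vᵀ, hVVt, Matrix.mul_one]
    have hVGV : Vᵀ * (Aᵀ * A) * V = Matrix.diagonal μ := by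
      rw [hGspec]
      have : Vᵀ * (V * Matrix.diagonal μ * Vᵀ) * V
          = (Vᵀ * V) * Matrix.diagonal μ * (Vᵀ * V) := by simp only [Matrix.mul_assoc]
      rw [this, hVtV, Matrix.one_mul, Matrix.mul_one]
    have hF2AW : F2 (A - A * V * ETop * Vᵀ) = ∑ i ∈ Topᶜ, μ i := by
      rw [hAW, F2_mul_orthR _ Vᵀ (by rw [Matrix.transpose_transpose, hVtV]), hE1, F2_eq_trace]
      have hXtX : (A * V * Matrix.diagonal e1)ᵀ * (A * V * Matrix.diagonal e1)
          = Matrix.diagonal e1 * (Vᵀ * (Aᵀ * A) * V) * Matrix.diagonal e1 := by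
        rw [Matrix.transpose_mul, Matrix.diagonal_transpose, Matrix.transpose_mul]
        simp only [Matrix.mul_assoc]
      rw [hXtX, hVGV, Matrix.diagonal_mul_diagonal, Matrix.diagonal_mul_diagonal,
        Matrix.trace_diagonal]
      have : ∀ i, e1 i * μ i * e1 i = if i ∈ Topᶜ then μ i else 0 := by
        intro i; by_cases h : i ∈ Top <;> simp [he1, h, Finset.mem_compl]
      rw [Finset.sum_congr rfl fun i _ => this i, Finset.sum_ite_mem, Finset.univ_inter]
    rw [hF2AW]
    have hsupp : {i | μ i ≠ 0}.ncard ≤ r₀ := by rw [hμcard]; exact hA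
    have := lemA μ p r₀ r₁ r₂ hr12 hr20 hμ0 hp0 hp1 hsupp hpsum Top
      (by rw [hTc, Fintype.card_fin]) hTsel
    calc ∑ i ∈ Topᶜ, μ i ≤ c * ∑ i, μ i * p i := this
      _ ≤ c * F2 (A - B) := mul_le_mul_of_nonneg_left hμple hc0

lemma sqrt_triangle {ι : Type*} [Fintype ι] (f g : ι → ℝ) :
    Real.sqrt (∑ i, (f i + g i)^2) ≤ Real.sqrt (∑ i, f i ^ 2) + Real.sqrt (∑ i, g i ^ 2) := by
  have hf0 : (0:ℝ) ≤ ∑ i, f i ^ 2 := Finset.sum_nonneg fun _ _ => sq_nonneg _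
  have hg0 : (0:ℝ) ≤ ∑ i, g i ^ 2 := Finset.sum_nonneg fun _ _ => sq_nonneg _
  have hCS : ∑ i, f i * g i ≤ Real.sqrt (∑ i, f i ^ 2) * Real.sqrt (∑ i, g i ^ 2) := by
    calc ∑ i, f i * g i ≤ |∑ i, f i * g i| := le_abs_self _
      _ = Real.sqrt ((∑ i, f i * g i)^2) := (Real.sqrt_sq_eq_abs _).symm
      _ ≤ Real.sqrt ((∑ i, f i ^ 2) * (∑ i, g i ^ 2)) :=
          Real.sqrt_le_sqrt (Finset.sum_mul_sq_le_sq_mul_sq Finset.univ f g)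
      _ = _ := Real.sqrt_mul hf0 _
  have hexp : ∑ i, (f i + g i)^2 = ∑ i, f i ^ 2 + 2 * ∑ i, f i * g i + ∑ i, g i ^ 2 := by
    rw [Finset.mul_sum, ← Finset.sum_add_distrib, ← Finset.sum_add_distrib]
    apply Finset.sum_congr rfl; intro i _; ring
  have key : ∑ i, (f i + g i)^2
      ≤ (Real.sqrt (∑ i, f i ^ 2) + Real.sqrt (∑ i, g i ^ 2))^2 := by
    rw [hexp]
    nlinarith [Real.sq_sqrt hf0, Real.sq_sqrt hg0, hCS]
  calc Real.sqrt (∑ i, (f i + g i)^2)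
      ≤ Real.sqrt ((Real.sqrt (∑ i, f i ^ 2) + Real.sqrt (∑ i, g i ^ 2))^2) :=
        Real.sqrt_le_sqrt key
    _ = _ := Real.sqrt_sq (by positivity)

lemma frobT_eq {d₁ d₂ d₃ : ℕ} (A : Fin d₃ → Matrix (Fin d₁) (Fin d₂) ℝ) :
    frobT A = Real.sqrt (∑ j, F2 (A j)) := rfl

lemma frobT_tri {d₁ d₂ d₃ : ℕ} (X W : Fin d₃ → Matrix (Fin d₁) (Fin d₂) ℝ) :
    frobT (X + W) ≤ frobT X + frobT W := by
  have h := sqrt_triangle (ι := Fin d₃ × Fin d₁ × Fin d₂)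
    (fun x => X x.1 x.2.1 x.2.2) (fun x => W x.1 x.2.1 x.2.2)
  simpa [frobT, Fintype.sum_prod_type] using h

theorem stmt4 {d₁ d₂ d₃ : ℕ} (r₀ r₁ r₂ s₀ s₁ s₂ : ℕ)
    (hr12 : r₁ < r₂) (hr20 : r₂ < r₀) (hs12 : s₁ < s₂) (hs20 : s₂ < s₀)
    (Z Y : Fin d₃ → Matrix (Fin d₁) (Fin d₂) ℝ)
    (hZ : memTheta2 Z r₀ s₀) (hY : memTheta2 Y r₁ s₁)
    -- step 1: slice-wise best rank-r₂ approximation of Z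
    (T : Fin d₃ → Matrix (Fin d₁) (Fin d₂) ℝ)
    (hT : ∀ j, (T j).rank ≤ r₂ ∧
      ∀ W : Matrix (Fin d₁) (Fin d₂) ℝ, W.rank ≤ r₂ →
        frobM (Z j - T j) ≤ frobM (Z j - W))
    -- step 2: keep the s₂ slices of largest Frobenius norm, zero out the rest
    (S : Finset (Fin d₃)) (hScard : S.card = min s₂ d₃)
    (hSsel : ∀ j ∈ S, ∀ j' ∉ S, frobM (T j') ≤ frobM (T j))
    (P : Fin d₃ → Matrix (Fin d₁) (Fin d₂) ℝ)
    (hP : ∀ j, P j = if j ∈ S then T j else 0) :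
    frobT (P - Z) ≤
      (Real.sqrt (((s₀ - s₂ : ℕ) : ℝ) / ((s₀ - s₁ : ℕ) : ℝ)) +
        Real.sqrt (((r₀ - r₂ : ℕ) : ℝ) / ((r₀ - r₁ : ℕ) : ℝ)) +
        Real.sqrt (((s₀ - s₂ : ℕ) : ℝ) / ((s₀ - s₁ : ℕ) : ℝ)) *
          Real.sqrt (((r₀ - r₂ : ℕ) : ℝ) / ((r₀ - r₁ : ℕ) : ℝ))) *
        frobT (Y - Z) := by
  classical
  obtain ⟨hZrank, hZsupp⟩ := hZ
  obtain ⟨hYrank, hYsupp⟩ := hY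
  set cr : ℝ := ((r₀ - r₂ : ℕ):ℝ)/((r₀ - r₁:ℕ):ℝ) with hcr
  set cs : ℝ := ((s₀ - s₂ : ℕ):ℝ)/((s₀ - s₁:ℕ):ℝ) with hcs
  have hcr0 : 0 ≤ cr := div_nonneg (Nat.cast_nonneg _) (Nat.cast_nonneg _)
  have hcs0 : 0 ≤ cs := div_nonneg (Nat.cast_nonneg _) (Nat.cast_nonneg _)
  -- T vanishes where Z vanishes
  have hTzero : ∀ j, Z j = 0 → T j = 0 := by
    intro j hj
    have h1 := (hT j).2 0 (by rw [Matrix.rank_zero]; exact Nat.zero_le _)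
    rw [hj, sub_zero] at h1
    have h2 := F2_le_of_frobM_le h1
    rw [zero_sub, F2_neg, F2_zero] at h2
    exact F2_eq_zero_iff.1 (le_antisymm h2 (F2_nonneg _))
  -- per-slice rank bound
  have h1 : ∀ j, F2 (T j - Z j) ≤ cr * F2 (Y j - Z j) := by
    intro j
    obtain ⟨W, hWr, hWb⟩ := rankApprox r₀ r₁ r₂ hr12 hr20 (Z j) (Y j) (hZrank j) (hYrank j)
    have h2 := F2_le_of_frobM_le ((hT j).2 W hWr)
    rw [F2_sub_comm (T j) (Z j), F2_sub_comm (Y j) (Z j)]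
    exact h2.trans hWb
  set t := frobT (Y - Z) with ht
  have ht0 : 0 ≤ t := Real.sqrt_nonneg _
  have hTZ : frobT (T - Z) ≤ Real.sqrt cr * t := by
    rw [frobT_eq, ht, frobT_eq, ← Real.sqrt_mul hcr0]
    apply Real.sqrt_le_sqrt
    rw [Finset.mul_sum]
    apply Finset.sum_le_sum
    intro j _
    simpa [Pi.sub_apply] using h1 j
  -- sparse step
  set μ : Fin d₃ → ℝ := fun j => F2 (T j) with hμdef
  set p : Fin d₃ → ℝ := fun j => if Y j = 0 then (1:ℝ) else 0 with hpdef
  have hsupp : {j | μ j ≠ 0}.ncard ≤ s₀ := by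
    refine le_trans (Set.ncard_le_ncard ?_ (Set.toFinite _)) hZsupp
    intro j hj
    simp only [Set.mem_setOf_eq] at hj ⊢
    intro hZj
    exact hj (by rw [hμdef]; simp only []; rw [hTzero j hZj, F2_zero])
  have hpsum : ((Fintype.card (Fin d₃)) : ℝ) - s₁ ≤ ∑ j, p j := by
    have hsum : ∑ j, p j = ((Finset.univ.filter (fun j => Y j = 0)).card : ℝ) := by
      rw [hpdef]
      simp [Finset.sum_boole]
    have hY' : (Finset.univ.filter (fun j => Y j ≠ 0)).card ≤ s₁ := by
      refine le_trans (le_of_eq ?_) hYsupp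
      rw [← Set.ncard_coe_finset]
      congr 1; ext j; simp
    have hsplit : (Finset.univ.filter (fun j => Y j = 0)).card
        + (Finset.univ.filter (fun j => Y j ≠ 0)).card = d₃ := by
      rw [Finset.card_filter_add_card_filter_not, Finset.card_univ, Fintype.card_fin]
    rw [hsum, Fintype.card_fin]
    have : (d₃:ℝ) ≤ ((Finset.univ.filter (fun j => Y j = 0)).card : ℝ) + s₁ := by
      have hn : d₃ ≤ (Finset.univ.filter (fun j => Y j = 0)).card + s₁ := by omega
      exact_mod_cast hn
    linarith
  have lem := lemA μ p s₀ s₁ s₂ hs12 hs20 (fun j => F2_nonneg _)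
    (fun j => by rw [hpdef]; dsimp only; split <;> norm_num)
    (fun j => by rw [hpdef]; dsimp only; split <;> norm_num)
    hsupp hpsum S (by rw [hScard, Fintype.card_fin])
    (fun j hj j' hj' => F2_le_of_frobM_le (hSsel j hj j' hj'))
  have hPT : frobT (P - T) ≤ Real.sqrt cs * frobT (Y - T) := by
    rw [frobT_eq, frobT_eq, ← Real.sqrt_mul hcs0]
    apply Real.sqrt_le_sqrt
    have hL : ∑ j, F2 ((P - T) j) = ∑ j ∈ Sᶜ, μ j := by
      have hterm : ∀ j, F2 ((P - T) j) = if j ∈ Sᶜ then μ j else 0 := by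
        intro j
        rw [Pi.sub_apply, hP j]
        by_cases h : j ∈ S
        · simp [h, F2_zero]
        · simp [h, zero_sub, F2_neg, hμdef]
      rw [Finset.sum_congr rfl fun j _ => hterm j, Finset.sum_ite_mem, Finset.univ_inter]
    have hR : ∑ j, μ j * p j ≤ ∑ j, F2 ((Y - T) j) := by
      apply Finset.sum_le_sum
      intro j _
      rw [Pi.sub_apply, hpdef]
      dsimp only
      by_cases h : Y j = 0
      · rw [if_pos h, mul_one, h, zero_sub, F2_neg]
      · rw [if_neg h, mul_zero]; exact F2_nonneg _
    calc ∑ j, F2 ((P - T) j) = ∑ j ∈ Sᶜ, μ j := hL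
      _ ≤ cs * ∑ j, μ j * p j := lem
      _ ≤ cs * ∑ j, F2 ((Y - T) j) := mul_le_mul_of_nonneg_left hR hcs0
  -- triangles
  have tri1 : frobT (P - Z) ≤ frobT (P - T) + frobT (T - Z) := by
    have h := frobT_tri (P - T) (T - Z)
    rwa [sub_add_sub_cancel] at h
  have hsym : frobT (Z - T) = frobT (T - Z) := by
    rw [frobT_eq, frobT_eq]
    congr 1
    exact Finset.sum_congr rfl fun j _ => by rw [Pi.sub_apply, Pi.sub_apply, F2_sub_comm]
  have tri2 : frobT (Y - T) ≤ t + frobT (T - Z) := by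
    have h := frobT_tri (Y - Z) (Z - T)
    rw [sub_add_sub_cancel, hsym] at h
    exact h
  have hα0 : 0 ≤ Real.sqrt cs := Real.sqrt_nonneg _
  have hβ0 : 0 ≤ Real.sqrt cr := Real.sqrt_nonneg _
  have hPT2 : frobT (P - T) ≤ Real.sqrt cs * (t + Real.sqrt cr * t) := by
    refine hPT.trans (mul_le_mul_of_nonneg_left ?_ hα0)
    exact tri2.trans (by linarith)
  calc frobT (P - Z) ≤ frobT (P - T) + frobT (T - Z) := tri1
    _ ≤ Real.sqrt cs * (t + Real.sqrt cr * t) + Real.sqrt cr * t := add_le_add hPT2 hTZ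
    _ = (Real.sqrt cs + Real.sqrt cr + Real.sqrt cs * Real.sqrt cr) * t := by ring
end
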